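/- arXiv:1905.11839 — 3 statements merged into one kernel-verified Lean document; each statement's English description precedes it below -/
import Mathlib

section
/- If M is a matrix in SL(2,ℝ) with |trace(M)| = 2 and M ≠ ±I, then M is conjugate in GL(2,ℝ) to ±![![1, ±1], ![0, 1]]: there exist P ∈ GL(2,ℝ) and ε₁, ε₂ ∈ {1, -1} with P⁻¹ M P = ε₁ • ![![1, ε₂], ![0, 1]]. -/
open Real Matrix

lemma aux_parabolic (N : Matrix (Fin 2) (Fin 2) ℝ) (hdet : N.det = 1)
    (htr : N 0 0 + N 1 1 = 2) (h1 : N ≠ 1) :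
    ∃ P : Matrix (Fin 2) (Fin 2) ℝ, IsUnit P ∧ P⁻¹ * N * P = !![1, 1; 0, 1] := by
  rw [Matrix.det_fin_two] at hdet
  by_cases hc : N 1 0 = 0
  · -- upper triangular case: N 0 0 = N 1 1 = 1, N 0 1 ≠ 0
    rw [hc, mul_zero, sub_zero] at hdet
    have ha : N 0 0 = 1 := by nlinarith [sq_nonneg (N 0 0 - 1)]
    have hd : N 1 1 = 1 := by linarith
    have hb : N 0 1 ≠ 0 := by
      intro hb
      apply h1
      ext i j
      fin_cases i <;> fin_cases j <;>
        simp [ha, hb, hc, hd, Matrix.one_apply]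
    refine ⟨!![N 0 1, 0; 0, 1], ?_, ?_⟩
    · rw [Matrix.isUnit_iff_isUnit_det, isUnit_iff_ne_zero]
      simp [Matrix.det_fin_two, hb]
    · have hP : IsUnit (!![N 0 1, 0; 0, 1] : Matrix (Fin 2) (Fin 2) ℝ).det := by
        rw [isUnit_iff_ne_zero]; simp [Matrix.det_fin_two, hb]
      have key : N * !![N 0 1, 0; 0, 1] = !![N 0 1, 0; 0, 1] * !![1, 1; 0, 1] := by
        ext i j
        fin_cases i <;> fin_cases j <;>
          simp [Matrix.mul_apply, Fin.sum_univ_two, ha, hc, hd]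
      rw [mul_assoc, key, ← mul_assoc, Matrix.nonsing_inv_mul _ hP, one_mul]
  · -- N 1 0 ≠ 0 case
    refine ⟨!![N 0 0 - 1, 1; N 1 0, 0], ?_, ?_⟩
    · rw [Matrix.isUnit_iff_isUnit_det, isUnit_iff_ne_zero]
      simp [Matrix.det_fin_two, hc]
    · have hP : IsUnit (!![N 0 0 - 1, 1; N 1 0, 0] : Matrix (Fin 2) (Fin 2) ℝ).det := by
        rw [isUnit_iff_ne_zero]; simp [Matrix.det_fin_two, hc]
      have key : N * !![N 0 0 - 1, 1; N 1 0, 0]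
          = !![N 0 0 - 1, 1; N 1 0, 0] * !![1, 1; 0, 1] := by
        have hbc : N 0 1 * N 1 0 = -(N 0 0 - 1)^2 := by
          linear_combination N 0 0 * htr - hdet
        have hct : N 1 0 * (N 0 0 + N 1 1) = 2 * N 1 0 := by
          linear_combination N 1 0 * htr
        ext i j
        fin_cases i <;> fin_cases j <;>
          simp [Matrix.mul_apply, Fin.sum_univ_two] <;> nlinarith [hbc, hct]
      rw [mul_assoc, key, ← mul_assoc, Matrix.nonsing_inv_mul _ hP, one_mul]

theorem parabolic_conjugate_shear
    (M : Matrix (Fin 2) (Fin 2) ℝ) (hdet : M.det = 1)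
    (htr : |M 0 0 + M 1 1| = 2) (h1 : M ≠ 1) (h2 : M ≠ -1) :
    ∃ P : Matrix (Fin 2) (Fin 2) ℝ, IsUnit P ∧
      ∃ ε₁ ε₂ : ℝ, (ε₁ = 1 ∨ ε₁ = -1) ∧ (ε₂ = 1 ∨ ε₂ = -1) ∧
        P⁻¹ * M * P = ε₁ • !![1, ε₂; 0, 1] := by
  rcases abs_eq (by norm_num : (0:ℝ) ≤ 2) |>.mp htr with h | h
  · obtain ⟨P, hP, hPM⟩ := aux_parabolic M hdet h h1
    exact ⟨P, hP, 1, 1, Or.inl rfl, Or.inl rfl, by rw [hPM, one_smul]⟩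
  · have hdet' : (-M).det = 1 := by
      rw [Matrix.det_neg]; simp [hdet]
    have htr' : (-M) 0 0 + (-M) 1 1 = 2 := by simp; linarith
    have h1' : -M ≠ 1 := by
      intro hM; apply h2; rw [← neg_neg M, hM]
    obtain ⟨P, hP, hPM⟩ := aux_parabolic (-M) hdet' htr' h1'
    refine ⟨P, hP, -1, 1, Or.inr rfl, Or.inl rfl, ?_⟩
    have : P⁻¹ * M * P = -(P⁻¹ * (-M) * P) := by noncomm_ring
    rw [this, hPM, neg_one_smul]
end

section
/- Let v : ℝ → ℝ² be differentiable and nowhere zero, and suppose v(t) = ρ(t) • (cos θ(t), sin θ(t)) with ρ, θ : ℝ → ℝ differentiable and ρ > 0. Then for each t, the vectors v(t) and v'(t) are linearly independent over ℝ if and only if θ'(t) ≠ 0. -/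
open Real

theorem linear_independence_iff_theta_dot_ne_zero
    (ρ θ : ℝ → ℝ) (hρ : Differentiable ℝ ρ) (hθ : Differentiable ℝ θ)
    (hρpos : ∀ t, 0 < ρ t)
    (v : ℝ → Fin 2 → ℝ)
    (hv : ∀ t, v t = ρ t • ![Real.cos (θ t), Real.sin (θ t)])
    (t : ℝ) :
    LinearIndependent ℝ ![v t, deriv v t] ↔ deriv θ t ≠ 0 := by
  have hvf : v = fun u => ![ρ u * Real.cos (θ u), ρ u * Real.sin (θ u)] := by
    funext u
    rw [hv u]
    ext i
    fin_cases i <;> simp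
  set c := Real.cos (θ t)
  set s := Real.sin (θ t)
  set ρ' := deriv ρ t
  set θ' := deriv θ t
  have h0 : HasDerivAt (fun u => ρ u * Real.cos (θ u))
      (ρ' * c + ρ t * (-s * θ')) t :=
    (hρ t).hasDerivAt.mul ((hθ t).hasDerivAt.cos)
  have h1 : HasDerivAt (fun u => ρ u * Real.sin (θ u))
      (ρ' * s + ρ t * (c * θ')) t :=
    (hρ t).hasDerivAt.mul ((hθ t).hasDerivAt.sin)
  have hder : HasDerivAt v (![ρ' * c + ρ t * (-s * θ'), ρ' * s + ρ t * (c * θ')]) t := by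
    rw [hvf]
    rw [hasDerivAt_pi]
    intro i
    fin_cases i
    · exact h0
    · exact h1
  have hdv : deriv v t = ![ρ' * c + ρ t * (-s * θ'), ρ' * s + ρ t * (c * θ')] :=
    hder.deriv
  have hvt : v t = ![ρ t * c, ρ t * s] := by
    rw [hvf]
  rw [hdv, hvt]
  have key : LinearIndependent ℝ
      ![![ρ t * c, ρ t * s], ![ρ' * c + ρ t * (-s * θ'), ρ' * s + ρ t * (c * θ')]]
      ↔ IsUnit (Matrix.of ![![ρ t * c, ρ t * s],
          ![ρ' * c + ρ t * (-s * θ'), ρ' * s + ρ t * (c * θ')]]) := by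
    rw [← Matrix.linearIndependent_rows_iff_isUnit]
    constructor <;> intro h <;> convert h using 1 <;> rfl
  rw [key, Matrix.isUnit_iff_isUnit_det, Matrix.det_fin_two, isUnit_iff_ne_zero]
  have hcs : c ^ 2 + s ^ 2 = 1 := by
    simpa [c, s] using Real.cos_sq_add_sin_sq (θ t)
  have hdet : (Matrix.of ![![ρ t * c, ρ t * s],
      ![ρ' * c + ρ t * (-s * θ'), ρ' * s + ρ t * (c * θ')]]).det = ρ t ^ 2 * θ' := by
    rw [Matrix.det_fin_two]
    simp only [Matrix.of_apply, Matrix.cons_val', Matrix.cons_val_zero, Matrix.cons_val_one,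
      Matrix.head_cons, Matrix.empty_val', Matrix.cons_val_fin_one, Matrix.head_fin_const]
    linear_combination (ρ t ^ 2 * θ') * hcs
  rw [Matrix.det_fin_two] at hdet
  rw [hdet]
  have hne : ρ t ^ 2 ≠ 0 := pow_ne_zero 2 (hρpos t).ne'
  constructor
  · intro h hθ0; exact h (by rw [hθ0, mul_zero])
  · intro h; exact mul_ne_zero hne h
end

section
/- In the Lie algebra 𝔤 of Example 4.2 (brackets [W,X]=-X, [W,Y]=Y, [X,Y]=Z, others zero), the distribution element X alone fails the generation condition: span{W, X, ⁅W, X⁆} = span{W, X} ≠ span{W, X, Y}, since ⁅W,X⁆ = -X. Meanwhile for every s ≠ 0, span{W, X + sY, ⁅W, X + sY⁆} = span{W, X, Y}. -/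
/-!
`ad W` is diagonal in the basis `X, Y`, with eigenvalues `-1` and `1`. So `X` is an eigenvector
and `⁅W, X⁆` adds nothing to `span {W, X}`, whereas `X + sY` and `⁅W, X + sY⁆ = -X + sY` have
half-sum `sY` and half-difference `X`, and so span both eigenlines once `s ≠ 0`.
-/

/-- The bracket of the Lie algebra of `Sol⁴₁` in the basis `W = e₀`, `X = e₁`,
`Y = e₂`, `Z = e₃`, determined by `[W,X] = -X`, `[W,Y] = Y`, `[X,Y] = Z` and all
other basis brackets zero. -/
def solBracket (u v : Fin 4 → ℝ) : Fin 4 → ℝ :=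
  ![0, -(u 0 * v 1 - u 1 * v 0), u 0 * v 2 - u 2 * v 0, u 1 * v 2 - u 2 * v 1]

namespace Submodule

variable {R M : Type*} [Ring R] [AddCommGroup M] [Module R M]

theorem span_insert_insert_neg (a b : M) : span R {a, b, -b} = span R {a, b} := by
  rw [Set.pair_comm b, span_insert, span_insert_eq_span (neg_mem (mem_span_singleton_self b)),
    ← span_insert]

theorem span_pair_ne_span_insert_of_apply {N : Type*} [AddCommGroup N] [Module R N]
    (f : M →ₗ[R] N) {a b c : M} (ha : f a = 0) (hb : f b = 0) (hc : f c ≠ 0) :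
    span R {a, b} ≠ span R {a, b, c} := by
  intro h
  have hc_mem : c ∈ span R {a, b} := h ▸ subset_span (by simp)
  obtain ⟨x, y, rfl⟩ := mem_span_pair.mp hc_mem
  simp [ha, hb] at hc

section Field

variable {K V : Type*} [Field K] [AddCommGroup V] [Module K V]

theorem span_pair_add_smul_neg_add_smul (h2 : (2 : K) ≠ 0) {s : K} (hs : s ≠ 0) (b c : V) :
    span K {b + s • c, -b + s • c} = span K {b, c} := by
  apply le_antisymm
  · rw [span_le]
    rintro v (rfl | rfl) <;> rw [SetLike.mem_coe, mem_span_pair]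
    · exact ⟨1, s, by rw [one_smul]⟩
    · exact ⟨-1, s, by module⟩
  · rw [span_le]
    rintro v (rfl | rfl) <;> rw [SetLike.mem_coe, mem_span_pair]
    · exact ⟨2⁻¹, -2⁻¹, by match_scalars <;> field_simp <;> ring⟩
    · exact ⟨(2 * s)⁻¹, (2 * s)⁻¹, by match_scalars <;> field_simp <;> ring⟩

theorem span_insert_pair_add_smul_neg_add_smul (h2 : (2 : K) ≠ 0) {s : K} (hs : s ≠ 0)
    (a b c : V) : span K {a, b + s • c, -b + s • c} = span K {a, b, c} := by
  rw [span_insert, span_pair_add_smul_neg_add_smul h2 hs, ← span_insert]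

end Field

end Submodule

theorem solBracket_W_X_add_smul_Y (s : ℝ) :
    solBracket ![1, 0, 0, 0] (![0, 1, 0, 0] + s • ![0, 0, 1, 0]) =
      -![0, 1, 0, 0] + s • ![0, 0, 1, 0] := by
  funext i; fin_cases i <;> simp [solBracket]

theorem sol_rotation_number_not_homotopy_invariant :
    let W : Fin 4 → ℝ := ![1, 0, 0, 0]
    let X : Fin 4 → ℝ := ![0, 1, 0, 0]
    let Y : Fin 4 → ℝ := ![0, 0, 1, 0]
    solBracket W X = -X ∧
    Submodule.span ℝ {W, X, solBracket W X} = Submodule.span ℝ {W, X} ∧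
    Submodule.span ℝ {W, X} ≠ Submodule.span ℝ {W, X, Y} ∧
    ∀ s : ℝ, s ≠ 0 →
      solBracket W (X + s • Y) = -X + s • Y ∧
      Submodule.span ℝ {W, X + s • Y, solBracket W (X + s • Y)} =
        Submodule.span ℝ {W, X, Y} := by
  intro W X Y
  have hWX : solBracket W X = -X := by
    simpa only [zero_smul, add_zero] using solBracket_W_X_add_smul_Y 0
  refine ⟨hWX, ?_, ?_, fun s hs => ⟨solBracket_W_X_add_smul_Y s, ?_⟩⟩
  · rw [hWX, Submodule.span_insert_insert_neg]
  · exact Submodule.span_pair_ne_span_insert_of_apply (LinearMap.proj 2) (by simp [W])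
      (by simp [X]) (by simp [Y])
  · rw [solBracket_W_X_add_smul_Y,
      Submodule.span_insert_pair_add_smul_neg_add_smul two_ne_zero hs]
end
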